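/- arXiv:0906.1994 — 5 statements merged into one kernel-verified Lean document; each statement's English description precedes it below -/
import Mathlib

section
/- Let k ∈ {1,2,...,∞} and let Λ be a topological k-graph. If Λ is row-finite for degree m and row-finite for degree n (m, n ∈ ℕ^k), then Λ is row-finite for degree m+n. That is, if for each vertex v there is a neighborhood V with r_m^{-1}(V) compact, and similarly for degree n, then for each vertex v there is a neighborhood V with r_{m+n}^{-1}(V) compact. -/
open scoped Topology

variable {ι Obj Mor : Type}

/-- A topological `k`-graph (Yeend), with degrees in `ι →₀ ℕ`. -/
structure TopKGraphStr (ι Obj Mor : Type) [TopologicalSpace Obj] [TopologicalSpace Mor] where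
  r : Mor → Obj
  s : Mor → Obj
  d : Mor → (ι →₀ ℕ)
  comp : (l m : Mor) → s l = r m → Mor
  r_comp : ∀ l m h, r (comp l m h) = r l
  s_comp : ∀ l m h, s (comp l m h) = s m
  d_comp : ∀ l m h, d (comp l m h) = d l + d m
  r_cont : Continuous r
  s_cont : Continuous s
  s_locHomeo : IsLocalHomeomorph s
  comp_cont : Continuous (fun p : {q : Mor × Mor // s q.1 = r q.2} => comp p.1.1 p.1.2 p.2)
  comp_open : IsOpenMap (fun p : {q : Mor × Mor // s q.1 = r q.2} => comp p.1.1 p.1.2 p.2)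
  factor : ∀ (l : Mor) (m n : ι →₀ ℕ), d l = m + n →
    ∃! p : {q : Mor × Mor // s q.1 = r q.2},
      d p.1.1 = m ∧ d p.1.2 = n ∧ comp p.1.1 p.1.2 p.2 = l

variable [TopologicalSpace Obj] [TopologicalSpace Mor]

/-- Row-finiteness for degree `m`. -/
def RowFinite (G : TopKGraphStr ι Obj Mor) (m : ι →₀ ℕ) : Prop :=
  ∀ v : Obj, ∃ V ∈ 𝓝 v, IsCompact {l : Mor | G.d l = m ∧ G.r l ∈ V}

/-- No source for degree `m`. -/
def NoSource (G : TopKGraphStr ι Obj Mor) (m : ι →₀ ℕ) : Prop :=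
  ∀ v : Obj, ∀ V ∈ 𝓝 v, {l : Mor | G.d l = m ∧ G.r l ∈ V}.Nonempty

/-- Proposition 2.3, row-finite part: if a topological `k`-graph is
row-finite for degrees `m` and `n`, then it is row-finite for degree `m + n`. -/
theorem rowFinite_add [T2Space Obj] [T2Space Mor] [LocallyCompactSpace Obj]
    [LocallyCompactSpace Mor] (G : TopKGraphStr ι Obj Mor) (m n : ι →₀ ℕ)
    (hm : RowFinite G m) (hn : RowFinite G n) : RowFinite G (m + n) := by
  intro v
  obtain ⟨V, hV, hKm⟩ := hm v
  set Km : Set Mor := {l : Mor | G.d l = m ∧ G.r l ∈ V} with hKmdef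
  have hsK : IsCompact (G.s '' Km) := hKm.image G.s_cont
  choose W hW hWc using hn
  obtain ⟨t, ht⟩ := hsK.elim_nhds_subcover W (fun x _ => hW x)
  set C : Set Mor := ⋃ w ∈ t, {l : Mor | G.d l = n ∧ G.r l ∈ W w} with hCdef
  have hC : IsCompact C := t.finite_toSet.isCompact_biUnion (fun w _ => hWc w)
  refine ⟨V, hV, ?_⟩
  set T := {q : Mor × Mor // G.s q.1 = G.r q.2}
  set P : Set T := {p : T | p.1.1 ∈ Km ∧ p.1.2 ∈ C} with hPdef
  have hclosed : IsClosed {q : Mor × Mor | G.s q.1 = G.r q.2} :=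
    isClosed_eq (G.s_cont.comp continuous_fst) (G.r_cont.comp continuous_snd)
  have hPcomp : IsCompact P := by
    rw [Topology.IsEmbedding.subtypeVal.isCompact_iff]
    have : Subtype.val '' P = (Km ×ˢ C) ∩ {q : Mor × Mor | G.s q.1 = G.r q.2} := by
      ext q
      constructor
      · rintro ⟨⟨q', hq'⟩, ⟨h1, h2⟩, rfl⟩
        exact ⟨⟨h1, h2⟩, hq'⟩
      · rintro ⟨⟨h1, h2⟩, hq⟩
        exact ⟨⟨q, hq⟩, ⟨h1, h2⟩, rfl⟩
    rw [this]
    exact (hKm.prod hC).inter_right hclosed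
  have himg : {l : Mor | G.d l = m + n ∧ G.r l ∈ V}
      = (fun p : T => G.comp p.1.1 p.1.2 p.2) '' P := by
    ext l
    constructor
    · rintro ⟨hd, hr⟩
      obtain ⟨p, ⟨hdm, hdn, hcomp⟩, -⟩ := G.factor l m n hd
      refine ⟨p, ⟨⟨hdm, ?_⟩, ?_⟩, hcomp⟩
      · have := G.r_comp p.1.1 p.1.2 p.2
        rw [hcomp] at this
        rwa [← this]
      · have hr2 : G.r p.1.2 ∈ G.s '' Km := by
          refine ⟨p.1.1, ⟨hdm, ?_⟩, p.2⟩
          have := G.r_comp p.1.1 p.1.2 p.2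
          rw [hcomp] at this
          rwa [← this]
        have := ht.2 hr2
        simp only [Set.mem_iUnion] at this
        obtain ⟨w, hw, hmem⟩ := this
        exact Set.mem_biUnion hw ⟨hdn, hmem⟩
    · rintro ⟨p, ⟨⟨hdm, hrV⟩, hc⟩, rfl⟩
      have hdn : G.d p.1.2 = n := by
        simp only [hCdef, Set.mem_iUnion] at hc
        obtain ⟨w, hw, hdn, -⟩ := hc
        exact hdn
      refine ⟨?_, ?_⟩
      · rw [G.d_comp, hdm, hdn]
      · rw [G.r_comp]; exact hrV
  rw [himg]
  exact hPcomp.image G.comp_cont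
end

section
/- Let s : Y → X be a local homeomorphism between locally compact Hausdorff spaces, and let ξ : Y → ℂ be continuous. Suppose u_1,...,u_L : Y → [0,1] are continuous, s is injective on supp(u_i) for each i, and Σ_i u_i(λ)^2 = 1 for all λ ∈ supp(ξ). Define ⟨u_i, ξ⟩(v) = Σ_{s(μ)=v} conj(u_i(μ)) ξ(μ) for v ∈ X (a finite sum on the relevant supports). Then ξ(λ) = Σ_{i=1}^L u_i(λ) · ⟨u_i, ξ⟩(s(λ)) for every λ ∈ Y. -/
open scoped Topology

/-- Lemma 3.2(2): reconstruction formula `ξ = Σᵢ uᵢ⟨uᵢ, ξ⟩` for a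
partition of unity subordinate to the support of `ξ`, where
`⟨uᵢ, ξ⟩(v) = Σ_{s(μ)=v} conj(uᵢ(μ)) ξ(μ)` (a finite sum on the relevant supports,
formalized via `finsum`). -/
theorem partition_of_unity_reconstruction {X Y : Type*} [TopologicalSpace X]
    [TopologicalSpace Y] [T2Space X] [T2Space Y] [LocallyCompactSpace X]
    [LocallyCompactSpace Y]
    (s : Y → X) (hs : IsLocalHomeomorph s) (ξ : Y → ℂ) (hξ : Continuous ξ)
    (L : ℕ) (u : Fin L → Y → ℝ)
    (hu_cont : ∀ i, Continuous (u i))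
    (hu_mem : ∀ i y, u i y ∈ Set.Icc (0 : ℝ) 1)
    (hu_inj : ∀ i, Set.InjOn s (tsupport (fun y => u i y)))
    (hu_sum : ∀ y ∈ tsupport ξ, ∑ i, (u i y) ^ 2 = 1) :
    ∀ lam : Y, ξ lam =
      ∑ i, (u i lam : ℂ) * (∑ᶠ μ ∈ {μ : Y | s μ = s lam}, (u i μ : ℂ) * ξ μ) := by
  intro lam
  classical
  have key : ∀ i, (u i lam : ℂ) * (∑ᶠ μ ∈ {μ : Y | s μ = s lam}, (u i μ : ℂ) * ξ μ)
      = (u i lam : ℂ) ^ 2 * ξ lam := by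
    intro i
    by_cases h : u i lam = 0
    · simp [h]
    · have hlam : lam ∈ tsupport (fun y => u i y) := subset_tsupport _ h
      have hfin : ∑ᶠ μ ∈ {μ : Y | s μ = s lam}, (u i μ : ℂ) * ξ μ
          = ∑ μ ∈ ({lam} : Finset Y), (u i μ : ℂ) * ξ μ := by
        apply finsum_mem_eq_sum_of_inter_support_eq
        ext μ
        simp only [Set.mem_inter_iff, Set.mem_setOf_eq, Function.mem_support,
          Finset.coe_singleton, Set.mem_singleton_iff]
        constructor
        · rintro ⟨hsμ, hf⟩
          have huμ : u i μ ≠ 0 := by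
            intro h0
            apply hf
            simp [h0]
          have hμ : μ ∈ tsupport (fun y => u i y) := subset_tsupport _ huμ
          exact ⟨hu_inj i hμ hlam hsμ, hf⟩
        · rintro ⟨rfl, hf⟩
          exact ⟨rfl, hf⟩
      rw [hfin, Finset.sum_singleton]
      ring
  simp_rw [key]
  rw [← Finset.sum_mul]
  by_cases hl : lam ∈ tsupport ξ
  · have := hu_sum lam hl
    have h2 : (∑ i, (u i lam : ℂ) ^ 2) = 1 := by
      rw [← Complex.ofReal_one, ← this]
      push_cast
      ring
    rw [h2, one_mul]
  · have : ξ lam = 0 := image_eq_zero_of_notMem_tsupport hl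
    simp [this]
end

section
/- Let Λ be a row-finite topological k-graph with no source. Let {(u_i, u_i)}_{i=1}^L be an orthogonal pair of functions in C_c(Λ^m) (meaning s_m is 'orthogonal' in the sense u_i(λ)·conj(u_i(λ')) = 0 whenever s(λ)=s(λ'), λ ≠ λ'), and let f ∈ C_c(Λ^n). Then for any Cuntz–Pimsner covariant representation T, Σ_{i=1}^L T_m(u_i) φ_n^T(f) T_m(u_i)* = φ_{m+n}^T(Σ_{i=1}^L |u_i|² ⊗ f), where (|u_i|² ⊗ f)(λ) = |u_i(λ(0,m))|²·f(λ(m,m+n)) for λ ∈ Λ^{m+n}. -/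
open scoped Topology

variable {ι Obj Mor : Type}

variable [TopologicalSpace Obj] [TopologicalSpace Mor]

variable (G : TopKGraphStr ι Obj Mor)

/-- The fibre `Λ^m = d⁻¹(m)` as a subspace of the morphism space. -/
abbrev FibT (m : ι →₀ ℕ) : Type := {l : Mor // G.d l = m}

/-- A function vanishing at infinity, i.e. a member of `C₀`. -/
def IsC0 {Z : Type*} [TopologicalSpace Z] (f : Z → ℂ) : Prop :=
  Continuous f ∧ Filter.Tendsto f (Filter.cocompact Z) (𝓝 0)

/-- The `C₀(Λ⁰)`-valued inner product on functions on `Λ^m`: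
`⟨ξ,η⟩(v) = Σ_{s(λ)=v} conj(ξ λ) * η λ`. -/
noncomputable def sInner (m : ι →₀ ℕ) (ξ η : FibT G m → ℂ) (v : Obj) : ℂ :=
  ∑ᶠ l ∈ {l : FibT G m | G.s l.1 = v}, (starRingEnd ℂ) (ξ l) * η l

/-- Membership in the Hilbert bimodule `X_m = C_s(Λ^m)`:
continuous with `⟨ξ,ξ⟩ ∈ C₀(Λ⁰)`. -/
def InXm (m : ι →₀ ℕ) (ξ : FibT G m → ℂ) : Prop :=
  Continuous ξ ∧ IsC0 (sInner G m ξ ξ)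

/-- An orthogonal pair of functions on `Λ^m`: `ξ(λ)·conj(η(λ')) = 0` whenever
`s(λ) = s(λ')` and `λ ≠ λ'`. -/
def OrthPair (m : ι →₀ ℕ) (ξ η : FibT G m → ℂ) : Prop :=
  ∀ l l' : FibT G m, G.s l.1 = G.s l'.1 → l ≠ l' → ξ l * (starRingEnd ℂ) (η l') = 0

/-- A representation of the product system of a topological `k`-graph in a `*`-algebra
`B`: `T0` on `C₀(Λ⁰)` and fibre maps `T m` on `C_s(Λ^m)`, satisfying the Fowler
representation axioms (in particular `T_m(ξ)* T_m(η) = T₀(⟨ξ,η⟩)` and the bimodule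
relations). -/
structure GraphRep (B : Type*) [Ring B] [StarRing B] where
  T0 : (Obj → ℂ) → B
  T : (m : ι →₀ ℕ) → (FibT G m → ℂ) → B
  T0_mul : ∀ f g : Obj → ℂ, T0 (f * g) = T0 f * T0 g
  T0_star : ∀ f : Obj → ℂ, T0 (star f) = star (T0 f)
  T0_zero : T0 0 = 0
  adj : ∀ (m : ι →₀ ℕ) (ξ η : FibT G m → ℂ),
    star (T m ξ) * T m η = T0 (sInner G m ξ η)
  rmod : ∀ (m : ι →₀ ℕ) (ξ : FibT G m → ℂ) (a : Obj → ℂ),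
    T m (fun l => ξ l * a (G.s l.1)) = T m ξ * T0 a
  lmod : ∀ (m : ι →₀ ℕ) (ξ : FibT G m → ℂ) (a : Obj → ℂ),
    T m (fun l => a (G.r l.1) * ξ l) = T0 a * T m ξ

/-- The factorization (segment) maps of a topological `k`-graph: a path `λ` of degree
`m + n` factors uniquely as `λ = seg1 m n λ · seg2 m n λ` with degrees `m` and `n`
(`λ(0,m)` and `λ(m,m+n)`). -/
structure SegStr where
  seg1 : (ι →₀ ℕ) → (ι →₀ ℕ) → Mor → Mor
  seg2 : (ι →₀ ℕ) → (ι →₀ ℕ) → Mor → Mor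
  d_seg1 : ∀ m n l, G.d l = m + n → G.d (seg1 m n l) = m
  d_seg2 : ∀ m n l, G.d l = m + n → G.d (seg2 m n l) = n
  s_eq_r : ∀ m n l, G.d l = m + n → G.s (seg1 m n l) = G.r (seg2 m n l)
  comp_seg : ∀ m n l (h : G.d l = m + n),
    G.comp (seg1 m n l) (seg2 m n l) (s_eq_r m n l h) = l

variable {G}

/-- The product `ξ ⊗ η ∈ X_{m+n}` of `ξ ∈ X_m` and `η ∈ X_n`:
`(ξ⊗η)(λ) = ξ(λ(0,m))·η(λ(m,m+n))`. -/
def segProd (S : SegStr G) (m n : ι →₀ ℕ) (ξ : FibT G m → ℂ) (η : FibT G n → ℂ)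
    (l : FibT G (m + n)) : ℂ :=
  ξ ⟨S.seg1 m n l.1, S.d_seg1 m n l.1 l.2⟩ * η ⟨S.seg2 m n l.1, S.d_seg2 m n l.1 l.2⟩

/-- Multiplicativity of a product-system representation across fibres:
`T_m(ξ)·T_n(η) = T_{m+n}(ξ⊗η)`. -/
def GraphRep.Multiplicative {B : Type*} [Ring B] [StarRing B]
    (R : GraphRep G B) (S : SegStr G) : Prop :=
  ∀ (m n : ι →₀ ℕ) (ξ : FibT G m → ℂ) (η : FibT G n → ℂ),
    R.T m ξ * R.T n η = R.T (m + n) (segProd S m n ξ η)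

/-- Lemma 3.8: for an orthogonal pair `{(uᵢ,uᵢ)}` of degree `m` and
`f ∈ C_c(Λⁿ)`, `Σᵢ T_m(uᵢ) φ_n^T(f) T_m(uᵢ)* = φ_{m+n}^T(Σᵢ |uᵢ|² ⊗ f)`. Here
`φ_n^T(f)` is realized via an orthogonal-pair decomposition `f = Σⱼ ξⱼ·conj(ηⱼ)`, and
`φ_{m+n}^T(Σᵢ |uᵢ|² ⊗ f)` via any orthogonal-pair decomposition `{(ζ_p,χ_p)}` of the
function `λ ↦ Σᵢ |uᵢ(λ(0,m))|²·f(λ(m,m+n))`; well-definedness of `ψ_{m+n}^T` on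
finite-rank kernels is the hypothesis `hpsi`. -/
theorem sigma_phi_eq_phi_tensor [T2Space Obj] [T2Space Mor]
    [LocallyCompactSpace Obj] [LocallyCompactSpace Mor]
    (hrf : ∀ m, RowFinite G m) (hns : ∀ m, NoSource G m)
    {B : Type*} [Ring B] [StarRing B] (R : GraphRep G B) (S : SegStr G)
    (hmul : R.Multiplicative S)
    (m n : ι →₀ ℕ)
    (hpsi : ∀ (L M : ℕ) (ξ η : Fin L → FibT G (m + n) → ℂ)
      (ξ' η' : Fin M → FibT G (m + n) → ℂ),
      (∀ l l' : FibT G (m + n), G.s l.1 = G.s l'.1 →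
        ∑ i, ξ i l * (starRingEnd ℂ) (η i l') = ∑ j, ξ' j l * (starRingEnd ℂ) (η' j l')) →
      ∑ i, R.T (m + n) (ξ i) * star (R.T (m + n) (η i)) =
        ∑ j, R.T (m + n) (ξ' j) * star (R.T (m + n) (η' j)))
    (L : ℕ) (u : Fin L → FibT G m → ℂ)
    (hu_orth : ∀ i, OrthPair G m (u i) (u i))
    (hu_cont : ∀ i, Continuous (u i)) (hu_cpt : ∀ i, HasCompactSupport (u i))
    (f : FibT G n → ℂ) (hf_cont : Continuous f) (hf_cpt : HasCompactSupport f)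
    (M : ℕ) (ξ η : Fin M → FibT G n → ℂ)
    (hξη_orth : ∀ j, OrthPair G n (ξ j) (η j))
    (hdec : ∀ l : FibT G n, f l = ∑ j, ξ j l * (starRingEnd ℂ) (η j l))
    (P : ℕ) (ζ χ : Fin P → FibT G (m + n) → ℂ)
    (hζχ_orth : ∀ p, OrthPair G (m + n) (ζ p) (χ p))
    (hdecF : ∀ l : FibT G (m + n),
      (∑ p, ζ p l * (starRingEnd ℂ) (χ p l)) =
        ∑ i, (u i ⟨S.seg1 m n l.1, S.d_seg1 m n l.1 l.2⟩ *
              (starRingEnd ℂ) (u i ⟨S.seg1 m n l.1, S.d_seg1 m n l.1 l.2⟩)) *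
             f ⟨S.seg2 m n l.1, S.d_seg2 m n l.1 l.2⟩) :
    ∑ i, R.T m (u i) * (∑ j, R.T n (ξ j) * star (R.T n (η j))) * star (R.T m (u i)) =
      ∑ p, R.T (m + n) (ζ p) * star (R.T (m + n) (χ p)) := by
  classical
  have compExt : ∀ a a' b b' (h : G.s a = G.r b) (h' : G.s a' = G.r b'),
      a = a' → b = b' → G.comp a b h = G.comp a' b' h' := by
    rintro a a' b b' h h' rfl rfl; rfl
  set Ξ : Fin (L * M) → FibT G (m + n) → ℂ := fun c =>
    segProd S m n (u (finProdFinEquiv.symm c).1) (ξ (finProdFinEquiv.symm c).2) with hΞ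
  set H : Fin (L * M) → FibT G (m + n) → ℂ := fun c =>
    segProd S m n (u (finProdFinEquiv.symm c).1) (η (finProdFinEquiv.symm c).2) with hH
  have hsum_equiv : ∀ (F : Fin (L * M) → B),
      ∑ c, F c = ∑ i : Fin L, ∑ j : Fin M, F (finProdFinEquiv (i, j)) := by
    intro F
    rw [← Equiv.sum_comp finProdFinEquiv F, Fintype.sum_prod_type]
  have hsum_equivC : ∀ (F : Fin (L * M) → ℂ),
      ∑ c, F c = ∑ i : Fin L, ∑ j : Fin M, F (finProdFinEquiv (i, j)) := by
    intro F
    rw [← Equiv.sum_comp finProdFinEquiv F, Fintype.sum_prod_type]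
  have hker : ∀ l l' : FibT G (m + n), G.s l.1 = G.s l'.1 →
      ∑ c, Ξ c l * (starRingEnd ℂ) (H c l') = ∑ p, ζ p l * (starRingEnd ℂ) (χ p l') := by
    intro l l' hs
    set l1 : FibT G m := ⟨S.seg1 m n l.1, S.d_seg1 m n l.1 l.2⟩ with hl1
    set l2 : FibT G n := ⟨S.seg2 m n l.1, S.d_seg2 m n l.1 l.2⟩ with hl2
    set l1' : FibT G m := ⟨S.seg1 m n l'.1, S.d_seg1 m n l'.1 l'.2⟩ with hl1'
    set l2' : FibT G n := ⟨S.seg2 m n l'.1, S.d_seg2 m n l'.1 l'.2⟩ with hl2'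
    have hsl2 : G.s l.1 = G.s l2.1 := by
      conv_lhs => rw [← S.comp_seg m n l.1 l.2]
      rw [G.s_comp]
    have hsl2' : G.s l'.1 = G.s l2'.1 := by
      conv_lhs => rw [← S.comp_seg m n l'.1 l'.2]
      rw [G.s_comp]
    have hsum1 : ∑ c, Ξ c l * (starRingEnd ℂ) (H c l')
        = ∑ i, ∑ j, (u i l1 * (starRingEnd ℂ) (u i l1')) *
            (ξ j l2 * (starRingEnd ℂ) (η j l2')) := by
      rw [hsum_equivC]
      refine Finset.sum_congr rfl fun i _ => Finset.sum_congr rfl fun j _ => ?_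
      simp only [hΞ, hH, Equiv.symm_apply_apply, segProd, map_mul]
      ring
    rw [hsum1]
    by_cases hll : l = l'
    · subst hll
      have : ∀ i, ∑ j, (u i l1 * (starRingEnd ℂ) (u i l1')) *
          (ξ j l2 * (starRingEnd ℂ) (η j l2'))
          = (u i l1 * (starRingEnd ℂ) (u i l1)) * f l2 := by
        intro i
        rw [← Finset.mul_sum, ← hdec l2]
      simp only [this]
      rw [← hdecF l]
    · -- l ≠ l' : both sides vanish
      have hRHS : ∑ p, ζ p l * (starRingEnd ℂ) (χ p l') = 0 :=
        Finset.sum_eq_zero fun p _ => hζχ_orth p l l' hs hll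
      rw [hRHS]
      refine Finset.sum_eq_zero fun i _ => Finset.sum_eq_zero fun j _ => ?_
      by_cases h2 : l2 = l2'
      · -- second segments equal, so first segments differ
        have h1 : l1 ≠ l1' := by
          intro h1
          apply hll
          apply Subtype.ext
          rw [← S.comp_seg m n l.1 l.2, ← S.comp_seg m n l'.1 l'.2]
          exact compExt _ _ _ _ _ _ (congrArg Subtype.val h1) (congrArg Subtype.val h2)
        have hs1 : G.s l1.1 = G.s l1'.1 := by
          rw [S.s_eq_r m n l.1 l.2, S.s_eq_r m n l'.1 l'.2,
            show S.seg2 m n l.1 = l2.1 from rfl, show S.seg2 m n l'.1 = l2'.1 from rfl,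
            congrArg Subtype.val h2]
        rw [hu_orth i l1 l1' hs1 h1, zero_mul]
      · have hs2 : G.s l2.1 = G.s l2'.1 := by rw [← hsl2, ← hsl2', hs]
        rw [hξη_orth j l2 l2' hs2 h2, mul_zero]
  have step1 : ∑ i, R.T m (u i) * (∑ j, R.T n (ξ j) * star (R.T n (η j))) * star (R.T m (u i))
      = ∑ i, ∑ j, R.T (m + n) (segProd S m n (u i) (ξ j)) *
          star (R.T (m + n) (segProd S m n (u i) (η j))) := by
    refine Finset.sum_congr rfl fun i _ => ?_
    rw [Finset.mul_sum, Finset.sum_mul]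
    refine Finset.sum_congr rfl fun j _ => ?_
    rw [← hmul, ← hmul, star_mul]
    simp only [mul_assoc]
  rw [step1]
  have step2 : ∑ i, ∑ j, R.T (m + n) (segProd S m n (u i) (ξ j)) *
      star (R.T (m + n) (segProd S m n (u i) (η j)))
      = ∑ c, R.T (m + n) (Ξ c) * star (R.T (m + n) (H c)) := by
    rw [hsum_equiv fun c => R.T (m + n) (Ξ c) * star (R.T (m + n) (H c))]
    simp only [hΞ, hH, Equiv.symm_apply_apply]
  rw [step2]
  exact hpsi (L * M) P Ξ H ζ χ hker
end

section
/- Let Λ be a row-finite topological k-graph with no source, and for n, m ∈ ℕ^k and subsets U ⊆ Λ^n, U' ⊆ Λ^m define U ⋔ U' = Seg^n_{(0,n∧m)}(U) ∩ Seg^m_{(0,n∧m)}(U') ⊆ Λ^{n∧m}. If U, U' are open with U ⋔ U' = ∅, then for any ξ ∈ C_c(U) ⊆ X_n and η ∈ C_c(U') ⊆ X_m and any representation T of the product system satisfying Nica covariance, t_n(ξ)* t_m(η) = 0 in 𝒪(Λ). -/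
open scoped Topology

variable {ι Obj Mor : Type}

variable [TopologicalSpace Obj] [TopologicalSpace Mor]

variable (G : TopKGraphStr ι Obj Mor)

variable {G}

section Aux

open Filter in
lemma isC0_of_cc {Z : Type*} [TopologicalSpace Z] {f : Z → ℂ}
    (hc : Continuous f) (hs : HasCompactSupport f) : IsC0 f := by
  refine ⟨hc, ?_⟩
  have h0 : ∀ᶠ x in cocompact Z, f x = 0 := by
    rw [Filter.eventually_iff, Filter.mem_cocompact]
    exact ⟨tsupport f, hs, fun x hx => image_eq_zero_of_notMem_tsupport hx⟩
  exact Filter.Tendsto.congr' (h0.mono fun x hx => hx.symm) tendsto_const_nhds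

lemma exists_one_on {Z : Type} [TopologicalSpace Z] [T2Space Z] [LocallyCompactSpace Z]
    {K : Set Z} (hK : IsCompact K) :
    ∃ g : Z → ℂ, Continuous g ∧ HasCompactSupport g ∧ ∀ v ∈ K, g v = 1 := by
  obtain ⟨f, hf1, -, hfc, -⟩ :=
    exists_continuous_one_zero_of_isCompact hK isClosed_empty (Set.disjoint_empty K)
  refine ⟨fun v => (f v : ℂ), Complex.continuous_ofReal.comp f.continuous,
    hfc.comp_left Complex.ofReal_zero, fun v hv => ?_⟩
  have := hf1 hv
  simp only [Pi.one_apply] at this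
  simp [this]

lemma rf_compact [T2Space Obj] (hrf : ∀ q, RowFinite G q) (p : ι →₀ ℕ)
    {K : Set Obj} (hK : IsCompact K) :
    IsCompact {l : Mor | G.d l = p ∧ G.r l ∈ K} := by
  choose V hVmem hVcpt using hrf p
  obtain ⟨t, -, hcov⟩ := hK.elim_nhds_subcover V (fun v _ => hVmem v)
  have heq : {l : Mor | G.d l = p ∧ G.r l ∈ K}
      = (⋃ v ∈ t, {l : Mor | G.d l = p ∧ G.r l ∈ V v}) ∩ (G.r ⁻¹' K) := by
    ext l
    constructor
    · rintro ⟨hd, hr⟩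
      rcases Set.mem_iUnion₂.1 (hcov hr) with ⟨v, hvt, hlv⟩
      exact ⟨Set.mem_iUnion₂.2 ⟨v, hvt, ⟨hd, hlv⟩⟩, hr⟩
    · rintro ⟨hl, hr⟩
      rcases Set.mem_iUnion₂.1 hl with ⟨v, -, hd, -⟩
      exact ⟨hd, hr⟩
  rw [heq]
  exact (t.finite_toSet.isCompact_biUnion (fun v _ => hVcpt v)).inter_right
    (hK.isClosed.preimage G.r_cont)

/-- If `ζ` vanishes on the degree-`a` initial segment of every path in the support
of `ξ`, then `t_c(ξ)* t_a(ζ) = 0`. -/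
lemma L1 {B : Type*} [Ring B] [StarRing B] (R : GraphRep G B) (S : SegStr G)
    (hmul : R.Multiplicative S) (a b c : ι →₀ ℕ) (h : a + b = c)
    (ξ : FibT G c → ℂ) (ζ : FibT G a → ℂ) (e : Obj → ℂ)
    (hone : ∀ x : FibT G a, ζ x ≠ 0 → e (G.s x.1) = 1)
    (M : ℕ) (cs ds : Fin M → FibT G b → ℂ)
    (hsum : R.T0 e = ∑ i, R.T b (cs i) * star (R.T b (ds i)))
    (hvan : ∀ μ : FibT G c, ξ μ ≠ 0 → ∀ x : FibT G a, x.1 = S.seg1 a b μ.1 → ζ x = 0) :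
    star (R.T c ξ) * R.T a ζ = 0 := by
  subst h
  have hζ : R.T a ζ = R.T a ζ * R.T0 e := by
    have hfun : (fun x : FibT G a => ζ x * e (G.s x.1)) = ζ := by
      funext x
      by_cases hx : ζ x = 0
      · simp [hx]
      · rw [hone x hx, mul_one]
    rw [← R.rmod, hfun]
  have key : ∀ i : Fin M, star (R.T (a + b) ξ) * (R.T a ζ * R.T b (cs i)) = 0 := by
    intro i
    rw [hmul a b ζ (cs i), R.adj]
    have hz : sInner G (a + b) ξ (segProd S a b ζ (cs i)) = 0 := by
      funext v
      have h0 : ∀ l : FibT G (a + b),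
          (starRingEnd ℂ) (ξ l) * segProd S a b ζ (cs i) l = 0 := by
        intro l
        by_cases hl : ξ l = 0
        · rw [hl, map_zero, zero_mul]
        · have hv := hvan l hl ⟨S.seg1 a b l.1, S.d_seg1 a b l.1 l.2⟩ rfl
          simp [segProd, hv]
      show (∑ᶠ l ∈ {l : FibT G (a + b) | G.s l.1 = v},
          (starRingEnd ℂ) (ξ l) * segProd S a b ζ (cs i) l) = 0
      simp [h0]
    rw [hz, R.T0_zero]
  rw [hζ, hsum, Finset.mul_sum, Finset.mul_sum]
  refine Finset.sum_eq_zero fun i _ => ?_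
  rw [← mul_assoc (R.T a ζ), ← mul_assoc, key i, zero_mul]

/-- If `χ` vanishes on the degree-`a` initial segment of every path in the support
of `η`, then `t_a(χ)* t_c(η) = 0`. -/
lemma L2 {B : Type*} [Ring B] [StarRing B] (R : GraphRep G B) (S : SegStr G)
    (hmul : R.Multiplicative S) (a b c : ι →₀ ℕ) (h : a + b = c)
    (χ : FibT G a → ℂ) (η : FibT G c → ℂ) (e : Obj → ℂ)
    (hone : ∀ x : FibT G a, χ x ≠ 0 → e (G.s x.1) = 1)
    (M : ℕ) (cs ds : Fin M → FibT G b → ℂ)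
    (hsum : R.T0 e = ∑ i, R.T b (cs i) * star (R.T b (ds i)))
    (hvan : ∀ ν : FibT G c, η ν ≠ 0 → ∀ x : FibT G a, x.1 = S.seg1 a b ν.1 → χ x = 0) :
    star (R.T a χ) * R.T c η = 0 := by
  subst h
  have hχ : R.T a χ = ∑ i, R.T (a + b) (segProd S a b χ (cs i)) * star (R.T b (ds i)) := by
    have hfun : (fun x : FibT G a => χ x * e (G.s x.1)) = χ := by
      funext x
      by_cases hx : χ x = 0
      · simp [hx]
      · rw [hone x hx, mul_one]
    calc R.T a χ = R.T a χ * R.T0 e := by rw [← R.rmod, hfun]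
      _ = ∑ i, R.T a χ * (R.T b (cs i) * star (R.T b (ds i))) := by
          rw [hsum, Finset.mul_sum]
      _ = ∑ i, R.T (a + b) (segProd S a b χ (cs i)) * star (R.T b (ds i)) := by
          refine Finset.sum_congr rfl fun i _ => ?_
          rw [← mul_assoc, hmul a b χ (cs i)]
  have key : ∀ i : Fin M,
      star (R.T (a + b) (segProd S a b χ (cs i))) * R.T (a + b) η = 0 := by
    intro i
    rw [R.adj]
    have hz : sInner G (a + b) (segProd S a b χ (cs i)) η = 0 := by
      funext v
      have h0 : ∀ l : FibT G (a + b),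
          (starRingEnd ℂ) (segProd S a b χ (cs i) l) * η l = 0 := by
        intro l
        by_cases hl : η l = 0
        · rw [hl, mul_zero]
        · have hv := hvan l hl ⟨S.seg1 a b l.1, S.d_seg1 a b l.1 l.2⟩ rfl
          simp [segProd, hv]
      show (∑ᶠ l ∈ {l : FibT G (a + b) | G.s l.1 = v},
          (starRingEnd ℂ) (segProd S a b χ (cs i) l) * η l) = 0
      simp [h0]
    rw [hz, R.T0_zero]
  rw [hχ, star_sum, Finset.sum_mul]
  refine Finset.sum_eq_zero fun i _ => ?_
  rw [star_mul, star_star, mul_assoc, key i, mul_zero]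

end Aux

/-- Lemma 4.8: if `U ⊆ Λⁿ`, `U' ⊆ Λ^m` are open with
`U ⋔ U' = Seg^n_{(0,n∧m)}(U) ∩ Seg^m_{(0,n∧m)}(U') = ∅`, then for `ξ ∈ C_c(U)` and
`η ∈ C_c(U')` and any Cuntz–Pimsner covariant representation of the product system
satisfying Nica covariance (the latter encoded by the well-definedness of the maps
`ψ_p^T` on finite-rank kernels, `hpsi`, which holds automatically in the row-finite
compactly aligned case), `t_n(ξ)* t_m(η) = 0`. -/
theorem perp_implies_orthogonal [T2Space Obj] [T2Space Mor]
    [LocallyCompactSpace Obj] [LocallyCompactSpace Mor]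
    (hrf : ∀ m, RowFinite G m) (hns : ∀ m, NoSource G m)
    {B : Type*} [Ring B] [StarRing B] (R : GraphRep G B) (S : SegStr G)
    (hmul : R.Multiplicative S)
    (hCP : ∀ (p : ι →₀ ℕ) (g : Obj → ℂ), IsC0 g →
      ∃ (M : ℕ) (ζ χ : Fin M → FibT G p → ℂ),
        (∀ j, OrthPair G p (ζ j) (χ j)) ∧
        (∀ l : FibT G p, g (G.r l.1) = ∑ j, ζ j l * (starRingEnd ℂ) (χ j l)) ∧
        R.T0 g = ∑ j, R.T p (ζ j) * star (R.T p (χ j)))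
    (hpsi : ∀ (p : ι →₀ ℕ) (L M : ℕ) (ξ η : Fin L → FibT G p → ℂ)
      (ξ' η' : Fin M → FibT G p → ℂ),
      (∀ l l' : FibT G p, G.s l.1 = G.s l'.1 →
        ∑ i, ξ i l * (starRingEnd ℂ) (η i l') = ∑ j, ξ' j l * (starRingEnd ℂ) (η' j l')) →
      ∑ i, R.T p (ξ i) * star (R.T p (η i)) = ∑ j, R.T p (ξ' j) * star (R.T p (η' j)))
    (n m : ι →₀ ℕ) (U : Set (FibT G n)) (U' : Set (FibT G m))
    (hU : IsOpen U) (hU' : IsOpen U')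
    (hperp : ∀ (l : FibT G n) (l' : FibT G m), l ∈ U → l' ∈ U' →
      S.seg1 (n ⊓ m) (n - n ⊓ m) l.1 ≠ S.seg1 (n ⊓ m) (m - n ⊓ m) l'.1)
    (ξ : FibT G n → ℂ) (hξ_cont : Continuous ξ) (hξ_cpt : HasCompactSupport ξ)
    (hξ_supp : tsupport ξ ⊆ U)
    (η : FibT G m → ℂ) (hη_cont : Continuous η) (hη_cpt : HasCompactSupport η)
    (hη_supp : tsupport η ⊆ U') :
    star (R.T n ξ) * R.T m η = 0 := by
  classical
  set p := n ⊓ m with hp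
  have h1 : p + (n - p) = n := add_tsub_cancel_of_le inf_le_left
  have h2 : p + (m - p) = m := add_tsub_cancel_of_le inf_le_right
  -- a compactly supported function equal to 1 on r(supp η)
  obtain ⟨g, hgc, hgs, hg1⟩ := exists_one_on
    (K := (fun ν : FibT G m => G.r ν.1) '' tsupport η)
    (hη_cpt.image (G.r_cont.comp continuous_subtype_val))
  have hgC0 : IsC0 g := isC0_of_cc hgc hgs
  have habs : R.T0 g * R.T m η = R.T m η := by
    rw [← R.lmod]
    congr 1
    funext ν
    by_cases hν : η ν = 0
    · simp [hν]
    · rw [hg1 _ ⟨ν, subset_tsupport η hν, rfl⟩, one_mul]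
  obtain ⟨M, ζ, χ, horth, hker, hsum⟩ := hCP p g hgC0
  set W : Set (FibT G p) := {x | ∃ ν : FibT G m, ν ∈ U' ∧ x.1 = S.seg1 p (m - p) ν.1}
    with hWdef
  set D : Set (FibT G p) := {x | g (G.r x.1) ≠ 0} with hDdef
  -- a compactly supported e equal to 1 on sources of the relevant degree-p paths
  have hTcpt : IsCompact {l : Mor | G.d l = p ∧ G.r l ∈ tsupport g} :=
    rf_compact hrf p hgs
  obtain ⟨e, hec, hes, he1⟩ := exists_one_on
    (K := G.s '' {l : Mor | G.d l = p ∧ G.r l ∈ tsupport g}) (hTcpt.image G.s_cont)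
  have heC0 : IsC0 e := isC0_of_cc hec hes
  have heD : ∀ x : FibT G p, x ∈ D → e (G.s x.1) = 1 := by
    intro x hx
    exact he1 _ ⟨x.1, ⟨x.2, subset_tsupport g hx⟩, rfl⟩
  obtain ⟨Mn, csn, dsn, -, -, hsumn⟩ := hCP (n - p) e heC0
  obtain ⟨Mm, csm, dsm, -, -, hsumm⟩ := hCP (m - p) e heC0
  -- the doubled, truncated family
  set ζ' : Fin (M + M) → FibT G p → ℂ :=
    Fin.addCases (fun i => (D ∩ W).indicator (ζ i))
      (fun i => (D ∩ Wᶜ).indicator (ζ i)) with hζ'def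
  set χ' : Fin (M + M) → FibT G p → ℂ :=
    Fin.addCases (fun i => (D ∩ W).indicator (χ i))
      (fun i => (D ∩ Wᶜ).indicator (χ i)) with hχ'def
  have hker' : ∀ l l' : FibT G p, G.s l.1 = G.s l'.1 →
      ∑ i, ζ i l * (starRingEnd ℂ) (χ i l')
        = ∑ j, ζ' j l * (starRingEnd ℂ) (χ' j l') := by
    intro l l' hss
    rw [Fin.sum_univ_add]
    simp only [hζ'def, hχ'def, Fin.addCases_left, Fin.addCases_right]
    by_cases hll : l = l'
    · subst hll
      by_cases hDl : l ∈ D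
      · by_cases hWl : l ∈ W
        · have hm1 : l ∈ D ∩ W := ⟨hDl, hWl⟩
          have hm2 : l ∉ D ∩ Wᶜ := fun h => h.2 hWl
          simp [Set.indicator_of_mem hm1, Set.indicator_of_notMem hm2]
        · have hm1 : l ∉ D ∩ W := fun h => hWl h.2
          have hm2 : l ∈ D ∩ Wᶜ := ⟨hDl, hWl⟩
          simp [Set.indicator_of_mem hm2, Set.indicator_of_notMem hm1]
      · have hm1 : l ∉ D ∩ W := fun h => hDl h.1
        have hm2 : l ∉ D ∩ Wᶜ := fun h => hDl h.1
        have hz : g (G.r l.1) = 0 := by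
          by_contra hzz
          exact hDl hzz
        simp only [Set.indicator_of_notMem hm1, Set.indicator_of_notMem hm2,
          zero_mul, Finset.sum_const_zero, add_zero]
        rw [← hker l, hz]
    · have hz : ∀ i, ζ i l * (starRingEnd ℂ) (χ i l') = 0 :=
        fun i => horth i l l' hss hll
      rw [Finset.sum_eq_zero fun i _ => hz i]
      have t1 : ∀ i : Fin M,
          (D ∩ W).indicator (ζ i) l * (starRingEnd ℂ) ((D ∩ W).indicator (χ i) l') = 0 := by
        intro i
        by_cases hm1 : l ∈ D ∩ W
        · by_cases hm2 : l' ∈ D ∩ W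
          · rw [Set.indicator_of_mem hm1, Set.indicator_of_mem hm2]; exact hz i
          · rw [Set.indicator_of_notMem hm2, map_zero, mul_zero]
        · rw [Set.indicator_of_notMem hm1, zero_mul]
      have t2 : ∀ i : Fin M,
          (D ∩ Wᶜ).indicator (ζ i) l * (starRingEnd ℂ) ((D ∩ Wᶜ).indicator (χ i) l') = 0 := by
        intro i
        by_cases hm1 : l ∈ D ∩ Wᶜ
        · by_cases hm2 : l' ∈ D ∩ Wᶜ
          · rw [Set.indicator_of_mem hm1, Set.indicator_of_mem hm2]; exact hz i
          · rw [Set.indicator_of_notMem hm2, map_zero, mul_zero]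
        · rw [Set.indicator_of_notMem hm1, zero_mul]
      rw [Finset.sum_eq_zero fun i _ => t1 i, Finset.sum_eq_zero fun i _ => t2 i, add_zero]
  have hswap : ∑ i, R.T p (ζ i) * star (R.T p (χ i))
      = ∑ j, R.T p (ζ' j) * star (R.T p (χ' j)) :=
    hpsi p M (M + M) ζ χ ζ' χ' hker'
  rw [← habs, hsum, hswap, Finset.sum_mul, Finset.mul_sum]
  refine Finset.sum_eq_zero fun j _ => ?_
  refine Fin.addCases (motive := fun j =>
    star (R.T n ξ) * (R.T p (ζ' j) * star (R.T p (χ' j)) * R.T m η) = 0)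
    (fun i => ?_) (fun i => ?_) j
  · -- left block: ζ' vanishes on initial segments of U-paths
    simp only [hζ'def, hχ'def, Fin.addCases_left]
    have hone : ∀ x : FibT G p, (D ∩ W).indicator (ζ i) x ≠ 0 → e (G.s x.1) = 1 := by
      intro x hx
      by_cases hm : x ∈ D ∩ W
      · exact heD x hm.1
      · rw [Set.indicator_of_notMem hm] at hx; exact absurd rfl hx
    have hvan : ∀ μ : FibT G n, ξ μ ≠ 0 → ∀ x : FibT G p,
        x.1 = S.seg1 p (n - p) μ.1 → (D ∩ W).indicator (ζ i) x = 0 := by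
      intro μ hμ x hx
      apply Set.indicator_of_notMem
      rintro ⟨-, hxW⟩
      obtain ⟨ν, hν, hxν⟩ := hxW
      exact hperp μ ν (hξ_supp (subset_tsupport ξ hμ)) hν (hx.symm.trans hxν)
    have hL := L1 R S hmul p (n - p) n h1 ξ ((D ∩ W).indicator (ζ i)) e hone
      Mn csn dsn hsumn hvan
    have hassoc : star (R.T n ξ) * (R.T p ((D ∩ W).indicator (ζ i))
          * star (R.T p ((D ∩ W).indicator (χ i))) * R.T m η)
        = star (R.T n ξ) * R.T p ((D ∩ W).indicator (ζ i))
          * (star (R.T p ((D ∩ W).indicator (χ i))) * R.T m η) := by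
      simp only [mul_assoc]
    rw [hassoc, hL, zero_mul]
  · -- right block: χ' vanishes on initial segments of U'-paths
    simp only [hζ'def, hχ'def, Fin.addCases_right]
    have hone : ∀ x : FibT G p, (D ∩ Wᶜ).indicator (χ i) x ≠ 0 → e (G.s x.1) = 1 := by
      intro x hx
      by_cases hm : x ∈ D ∩ Wᶜ
      · exact heD x hm.1
      · rw [Set.indicator_of_notMem hm] at hx; exact absurd rfl hx
    have hvan : ∀ ν : FibT G m, η ν ≠ 0 → ∀ x : FibT G p,
        x.1 = S.seg1 p (m - p) ν.1 → (D ∩ Wᶜ).indicator (χ i) x = 0 := by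
      intro ν hν x hx
      apply Set.indicator_of_notMem
      rintro ⟨-, hxWc⟩
      exact hxWc ⟨ν, hη_supp (subset_tsupport η hν), hx⟩
    have hR := L2 R S hmul p (m - p) m h2 ((D ∩ Wᶜ).indicator (χ i)) η e hone
      Mm csm dsm hsumm hvan
    have hassoc : star (R.T n ξ) * (R.T p ((D ∩ Wᶜ).indicator (ζ i))
          * star (R.T p ((D ∩ Wᶜ).indicator (χ i))) * R.T m η)
        = star (R.T n ξ) * R.T p ((D ∩ Wᶜ).indicator (ζ i))
          * (star (R.T p ((D ∩ Wᶜ).indicator (χ i))) * R.T m η) := by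
      simp only [mul_assoc]
    rw [hassoc, hR, mul_zero]
end

section
/- Let a₁, a₂ be nonzero integers and b₁, b₂ positive integers with gcd(|a₁a₂|, b₁b₂) = 1, and suppose a₁a₂ = a₁'a₂' and b₁b₂ = b₁'b₂' for another pair with gcd conditions. Then for every pair (p₁,p₂) ∈ {0,...,|a₁|−1} × {0,...,|a₂|−1} there exists a unique pair (q₁,q₂) ∈ {0,...,|a₁'|−1} × {0,...,|a₂'|−1} such that b₂(b₁p₁ + a₁p₂) ≡ b₂'(b₁'q₁ + a₁'q₂) (mod |a₁a₂|). -/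
/-- Injectivity core: if two index pairs in the box give congruent values, they are equal. -/
lemma index_inj (a₁ a₂ b₁ b₂ : ℤ) (ha₁ : a₁ ≠ 0) (ha₂ : a₂ ≠ 0)
    (hgcd : Int.gcd (a₁ * a₂) (b₁ * b₂) = 1)
    (q₁ q₂ r₁ r₂ : ℤ) (hq₁ : 0 ≤ q₁) (hq₁' : q₁ < |a₁|) (hq₂ : 0 ≤ q₂) (hq₂' : q₂ < |a₂|)
    (hr₁ : 0 ≤ r₁) (hr₁' : r₁ < |a₁|) (hr₂ : 0 ≤ r₂) (hr₂' : r₂ < |a₂|)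
    (h : b₂ * (b₁ * q₁ + a₁ * q₂) ≡ b₂ * (b₁ * r₁ + a₁ * r₂) [ZMOD ((a₁ * a₂).natAbs)]) :
    q₁ = r₁ ∧ q₂ = r₂ := by
  have hcop : IsCoprime (a₁ * a₂) (b₁ * b₂) := Int.isCoprime_iff_gcd_eq_one.mpr hgcd
  have hdvd : (a₁ * a₂) ∣ (b₂ * (b₁ * r₁ + a₁ * r₂) - b₂ * (b₁ * q₁ + a₁ * q₂)) := by
    have := h.dvd
    rwa [Int.natCast_natAbs, abs_dvd] at this
  have hcopb₂ : IsCoprime (a₁ * a₂) b₂ := hcop.of_mul_right_right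
  have hdvd2 : (a₁ * a₂) ∣ (b₁ * (r₁ - q₁) + a₁ * (r₂ - q₂)) := by
    have : (a₁ * a₂) ∣ b₂ * (b₁ * (r₁ - q₁) + a₁ * (r₂ - q₂)) := by
      convert hdvd using 1; ring
    exact hcopb₂.dvd_of_dvd_mul_left this
  have ha₁dvd : a₁ ∣ b₁ * (r₁ - q₁) := by
    have h1 : a₁ ∣ b₁ * (r₁ - q₁) + a₁ * (r₂ - q₂) :=
      dvd_trans (dvd_mul_right a₁ a₂) hdvd2
    have h2 : a₁ ∣ a₁ * (r₂ - q₂) := dvd_mul_right _ _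
    have h3 : b₁ * (r₁ - q₁) = (b₁ * (r₁ - q₁) + a₁ * (r₂ - q₂)) - a₁ * (r₂ - q₂) := by ring
    rw [h3]; exact dvd_sub h1 h2
  have hcop₁ : IsCoprime a₁ b₁ := hcop.of_mul_left_left.of_mul_right_left
  have h₁ : a₁ ∣ (r₁ - q₁) := hcop₁.dvd_of_dvd_mul_left ha₁dvd
  have heq₁ : q₁ = r₁ := by
    have habs : |r₁ - q₁| < |a₁| := abs_sub_lt_of_nonneg_of_lt hr₁ hr₁' hq₁ hq₁'
    have : r₁ - q₁ = 0 := Int.eq_zero_of_abs_lt_dvd ((abs_dvd _ _).mpr h₁) habs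
    omega
  have hdvd3 : a₁ * a₂ ∣ a₁ * (r₂ - q₂) := by
    have hz : b₁ * (r₁ - r₁) + a₁ * (r₂ - q₂) = a₁ * (r₂ - q₂) := by ring
    rwa [heq₁, hz] at hdvd2
  have h₂ : a₂ ∣ (r₂ - q₂) := (mul_dvd_mul_iff_left ha₁).mp hdvd3
  have heq₂ : q₂ = r₂ := by
    have habs : |r₂ - q₂| < |a₂| := abs_sub_lt_of_nonneg_of_lt hr₂ hr₂' hq₂ hq₂'
    have : r₂ - q₂ = 0 := Int.eq_zero_of_abs_lt_dvd ((abs_dvd _ _).mpr h₂) habs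
    omega
  exact ⟨heq₁, heq₂⟩

/-- combinatorial heart of Proposition 5.1: given nonzero integers
`a₁, a₂` and positive integers `b₁, b₂` with `gcd(|a₁a₂|, b₁b₂) = 1`, and another such
pair `a₁', a₂', b₁', b₂'` with `a₁a₂ = a₁'a₂'`, `b₁b₂ = b₁'b₂'` and
`gcd(|a₁'a₂'|, b₁'b₂') = 1`, for every `(p₁,p₂) ∈ {0,…,|a₁|−1} × {0,…,|a₂|−1}` there is a
unique `(q₁,q₂) ∈ {0,…,|a₁'|−1} × {0,…,|a₂'|−1}` with
`b₂(b₁p₁ + a₁p₂) ≡ b₂'(b₁'q₁ + a₁'q₂) (mod |a₁a₂|)`. -/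
theorem unique_index_pair (a₁ a₂ a₁' a₂' : ℤ) (ha₁ : a₁ ≠ 0) (ha₂ : a₂ ≠ 0)
    (ha₁' : a₁' ≠ 0) (ha₂' : a₂' ≠ 0)
    (b₁ b₂ b₁' b₂' : ℤ) (hb₁ : 0 < b₁) (hb₂ : 0 < b₂) (hb₁' : 0 < b₁') (hb₂' : 0 < b₂')
    (hgcd : Int.gcd (a₁ * a₂) (b₁ * b₂) = 1)
    (hgcd' : Int.gcd (a₁' * a₂') (b₁' * b₂') = 1)
    (ha : a₁ * a₂ = a₁' * a₂') (hb : b₁ * b₂ = b₁' * b₂') :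
    ∀ p₁ p₂ : ℕ, p₁ < a₁.natAbs → p₂ < a₂.natAbs →
      ∃! q : ℕ × ℕ, q.1 < a₁'.natAbs ∧ q.2 < a₂'.natAbs ∧
        (b₂ * (b₁ * p₁ + a₁ * p₂)) ≡
          (b₂' * (b₁' * q.1 + a₁' * q.2)) [ZMOD ((a₁ * a₂).natAbs)] := by
  intro p₁ p₂ hp₁ hp₂
  set N : ℕ := (a₁ * a₂).natAbs with hN
  have hNeq : N = a₁'.natAbs * a₂'.natAbs := by rw [hN, ha, Int.natAbs_mul]
  -- the function on the box
  set f : Fin a₁'.natAbs × Fin a₂'.natAbs → ZMod N :=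
    fun q => ((b₂' * (b₁' * (q.1 : ℤ) + a₁' * (q.2 : ℤ)) : ℤ) : ZMod N) with hf
  have hinj : Function.Injective f := by
    intro q r hqr
    have hmod : b₂' * (b₁' * (q.1 : ℤ) + a₁' * (q.2 : ℤ)) ≡
        b₂' * (b₁' * (r.1 : ℤ) + a₁' * (r.2 : ℤ)) [ZMOD ((a₁' * a₂').natAbs)] := by
      have := (ZMod.intCast_eq_intCast_iff _ _ N).mp hqr
      rwa [hN, ha] at this
    have hbound : ∀ (s : Fin a₁'.natAbs), (0 : ℤ) ≤ (s : ℤ) ∧ (s : ℤ) < |a₁'| := by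
      intro s
      constructor
      · exact Int.natCast_nonneg _
      · rw [Int.abs_eq_natAbs]
        exact_mod_cast s.2
    have hbound2 : ∀ (s : Fin a₂'.natAbs), (0 : ℤ) ≤ (s : ℤ) ∧ (s : ℤ) < |a₂'| := by
      intro s
      constructor
      · exact Int.natCast_nonneg _
      · rw [Int.abs_eq_natAbs]
        exact_mod_cast s.2
    obtain ⟨h1, h2⟩ := index_inj a₁' a₂' b₁' b₂' ha₁' ha₂' hgcd' _ _ _ _
      (hbound q.1).1 (hbound q.1).2 (hbound2 q.2).1 (hbound2 q.2).2
      (hbound r.1).1 (hbound r.1).2 (hbound2 r.2).1 (hbound2 r.2).2 hmod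
    have e1 : q.1 = r.1 := by ext; exact_mod_cast h1
    have e2 : q.2 = r.2 := by ext; exact_mod_cast h2
    exact Prod.ext e1 e2
  have hNpos : 0 < N := Int.natAbs_pos.mpr (mul_ne_zero ha₁ ha₂)
  haveI : NeZero N := ⟨hNpos.ne'⟩
  have hcard : Fintype.card (Fin a₁'.natAbs × Fin a₂'.natAbs) = Fintype.card (ZMod N) := by
    simp [ZMod.card, hNeq]
  have hbij : Function.Bijective f :=
    (Fintype.bijective_iff_injective_and_card f).mpr ⟨hinj, hcard⟩
  obtain ⟨q, hq⟩ := hbij.surjective ((b₂ * (b₁ * (p₁ : ℤ) + a₁ * (p₂ : ℤ)) : ℤ) : ZMod N)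
  refine ⟨(q.1, q.2), ⟨q.1.2, q.2.2, ?_⟩, ?_⟩
  · exact ((ZMod.intCast_eq_intCast_iff _ _ N).mp hq.symm)
  · rintro ⟨r₁, r₂⟩ ⟨hr₁, hr₂, hr⟩
    have : f (⟨r₁, hr₁⟩, ⟨r₂, hr₂⟩) = f q := by
      rw [hq]
      exact ((ZMod.intCast_eq_intCast_iff _ _ N).mpr hr.symm)
    have := hinj this
    have e1 : r₁ = (q.1 : ℕ) := congrArg (fun x => (x.1 : ℕ)) this
    have e2 : r₂ = (q.2 : ℕ) := congrArg (fun x => (x.2 : ℕ)) this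
    simp [e1, e2]
end
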